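/- arXiv:2112.00292 — 3 statements merged into one kernel-verified Lean document; each statement's English description precedes it below -/
import Mathlib

section
/- Asymptotics of the elliptic steady state (Theorem Appendix): Fix h > 0 and ε ∈ (0,h). For all sufficiently large a > 0, the boundary value problem -u'' = u(a - u) on (0,h), u'(0) = 0, u(h) = 0 admits a (unique) positive spatially inhomogeneous solution û, and û can be written as û(x) = a - g_a(x) on [0, h-ε], where g_a(x) ≥ 0 and g_a(x)/a → 0 as a → ∞ uniformly for x ∈ [0, h-ε]. Equivalently: for every δ > 0 there is A such that for all a > A there exists a positive solution û of the boundary value problem with |û(x)/a - 1| < δ for all x ∈ [0, h-ε]. -/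
/-!
Existence is proved by shooting. Let `u_c` solve `u'' = -u (a - u)`, `u(0) = c`, `u'(0) = 0`
(with the nonlinearity clamped, so that `u_c` exists on all of `[0, h]`); `c ↦ u_c(h)` is
continuous. For `c = a` the solution is constant, so `u_a(h) = a > 0`. For `c = (1 - η/2) a` and
`a` large, Sturm comparison with `sin (2π t / h)` makes `u_c` vanish before `h`; from then on
`u_c' < 0`, so `u_c(h) < 0`. A zero of `c ↦ u_c(h)` gives a positive solution with
`u(0) ≥ (1 - η/2) a`. By conservation of `u'² / 2 + a u² / 2 - u³ / 3`, wherever `u ≤ (1 - η) a`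
the slope is at most `-c_η a^{3/2}` for some `c_η > 0`, so `u` falls from
`(1 - η) a` to `0` within distance `O(a^{-1/2}) < ε` of `h`.

Uniqueness: if two positive solutions had `v(0) < u(0)`, the Wronskian `u' v - v' u` vanishes at
`0` and has derivative `u v (u - v) > 0` up to the first point `ξ` where `u = v`, while
`u - v ≥ 0` before `ξ` makes it nonpositive at `ξ`. Equal initial data then give equal solutions.
-/

open Real Set Filter Topology

section Calculus

variable {𝕜 E F : Type*} [NontriviallyNormedField 𝕜] [NormedAddCommGroup E] [NormedSpace 𝕜 E]
  [NormedAddCommGroup F] [NormedSpace 𝕜 F] {X : 𝕜 → E × F} {z : E × F} {t : 𝕜}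

theorem HasDerivAt.fst (hX : HasDerivAt X z t) : HasDerivAt (fun s => (X s).1) z.1 t :=
  (ContinuousLinearMap.fst 𝕜 E F).hasFDerivAt.comp_hasDerivAt t hX

theorem HasDerivAt.snd (hX : HasDerivAt X z t) : HasDerivAt (fun s => (X s).2) z.2 t :=
  (ContinuousLinearMap.snd 𝕜 E F).hasFDerivAt.comp_hasDerivAt t hX

theorem HasDerivWithinAt.nonpos_of_isMinOn_Icc {f : ℝ → ℝ} {f' a b : ℝ} (hab : a < b)
    (hf : HasDerivWithinAt f f' (Icc a b) b) (hmin : IsMinOn f (Icc a b) b) : f' ≤ 0 := by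
  have hcone : a - b ∈ posTangentConeAt (Icc a b) b :=
    mem_posTangentConeAt_of_segment_subset <| by
      rw [add_sub_cancel, segment_eq_Icc']
      exact Icc_subset_Icc (le_min hab.le le_rfl) (max_le le_rfl hab.le)
  have := hmin.localize.hasFDerivWithinAt_nonneg hf.hasFDerivWithinAt hcone
  rw [ContinuousLinearMap.toSpanSingleton_apply, smul_eq_mul] at this
  nlinarith

end Calculus

namespace EllipticSteadyState

lemma exists_first_zero {f : ℝ → ℝ} {a b : ℝ} (hab : a ≤ b) (hf : ContinuousOn f (Icc a b))
    (ha : 0 < f a) (hb : f b ≤ 0) : ∃ τ ∈ Ioc a b, f τ = 0 ∧ ∀ s ∈ Ico a τ, 0 < f s := by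
  set Z := Icc a b ∩ f ⁻¹' {0}
  have hZ : IsClosed Z := hf.preimage_isClosed_of_isClosed isClosed_Icc isClosed_singleton
  obtain ⟨τ₀, hτ₀, hfτ₀⟩ := intermediate_value_Icc' hab hf ⟨hb, ha.le⟩
  have hZbdd : BddBelow Z := ⟨a, fun x hx => hx.1.1⟩
  obtain ⟨⟨haτ, hτb⟩, hfτ⟩ := hZ.csInf_mem ⟨τ₀, hτ₀, hfτ₀⟩ hZbdd
  have hpos : ∀ s ∈ Ico a (sInf Z), 0 < f s := by
    rintro s ⟨has, hsτ⟩
    refine lt_of_not_ge fun hfs => ?_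
    obtain ⟨r, ⟨har, hrs⟩, hfr⟩ :=
      intermediate_value_Icc' has (hf.mono (Icc_subset_Icc_right (hsτ.le.trans hτb))) ⟨hfs, ha.le⟩
    exact absurd (csInf_le hZbdd ⟨⟨har, hrs.trans (hsτ.le.trans hτb)⟩, hfr⟩) (by linarith)
  exact ⟨sInf Z, ⟨haτ.lt_of_ne fun heq => ha.ne' (heq ▸ hfτ), hτb⟩, hfτ, hpos⟩

lemma antitoneOn_Icc_of_hasDerivAt {f f' : ℝ → ℝ} {a b : ℝ}
    (hf : ∀ t ∈ Icc a b, HasDerivAt f (f' t) t) (hf' : ∀ t ∈ Ioo a b, f' t ≤ 0) :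
    AntitoneOn f (Icc a b) :=
  antitoneOn_of_hasDerivWithinAt_nonpos (convex_Icc a b)
    (fun t ht => (hf t ht).continuousAt.continuousWithinAt)
    (fun t ht => (hf t (interior_subset ht)).hasDerivWithinAt)
    (fun t ht => hf' t (by rwa [interior_Icc] at ht))

lemma strictAntiOn_Icc_of_hasDerivAt {f f' : ℝ → ℝ} {a b : ℝ}
    (hf : ∀ t ∈ Icc a b, HasDerivAt f (f' t) t) (hf' : ∀ t ∈ Ioo a b, f' t < 0) :
    StrictAntiOn f (Icc a b) :=
  strictAntiOn_of_hasDerivWithinAt_neg (convex_Icc a b)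
    (fun t ht => (hf t ht).continuousAt.continuousWithinAt)
    (fun t ht => (hf t (interior_subset ht)).hasDerivWithinAt)
    (fun t ht => hf' t (by rwa [interior_Icc] at ht))

lemma contDiffOn_two_of_hasDerivWithinAt {u p q : ℝ → ℝ} {s : Set ℝ} (hs : UniqueDiffOn ℝ s)
    (hu : ∀ t ∈ s, HasDerivWithinAt u (p t) s t) (hp : ∀ t ∈ s, HasDerivWithinAt p (q t) s t)
    (hq : ContinuousOn q s) : ContDiffOn ℝ 2 u s := by
  have hp1 : ContDiffOn ℝ 1 p s := by
    rw [show (1 : WithTop ℕ∞) = 0 + 1 by norm_num, contDiffOn_succ_iff_derivWithin hs]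
    exact ⟨fun t ht => (hp t ht).differentiableWithinAt, by simp,
      (contDiffOn_zero.2 hq).congr fun t ht => (hp t ht).derivWithin (hs t ht)⟩
  rw [show (2 : WithTop ℕ∞) = 1 + 1 by norm_num, contDiffOn_succ_iff_derivWithin hs]
  exact ⟨fun t ht => (hu t ht).differentiableWithinAt, by simp,
    hp1.congr fun t ht => (hu t ht).derivWithin (hs t ht)⟩

lemma hasDerivWithinAt_derivWithin_of_contDiffOn {v φ : ℝ → ℝ} {a b : ℝ} (hab : a < b)
    (hv : ContDiffOn ℝ 2 v (Icc a b)) (hφ : Continuous φ)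
    (hode : ∀ x ∈ Ioo a b, deriv (deriv v) x = φ (v x)) (t : ℝ) (ht : t ∈ Icc a b) :
    HasDerivWithinAt v (derivWithin v (Icc a b) t) (Icc a b) t ∧
      HasDerivWithinAt (derivWithin v (Icc a b)) (φ (v t)) (Icc a b) t := by
  have hs := uniqueDiffOn_Icc hab
  rw [show (2 : WithTop ℕ∞) = 1 + 1 by norm_num, contDiffOn_succ_iff_derivWithin hs] at hv
  obtain ⟨hvd, -, hv'⟩ := hv
  rw [show (1 : WithTop ℕ∞) = 0 + 1 by norm_num, contDiffOn_succ_iff_derivWithin hs] at hv'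
  obtain ⟨hv'd, -, hv''⟩ := hv'
  have heq : EqOn (derivWithin (derivWithin v (Icc a b)) (Icc a b)) (φ ∘ v) (Ioo a b) := by
    intro x hx
    have hnhds : derivWithin v (Icc a b) =ᶠ[𝓝 x] deriv v :=
      eventually_of_mem (isOpen_Ioo.mem_nhds hx)
        fun y hy => derivWithin_of_mem_nhds (Icc_mem_nhds hy.1 hy.2)
    rw [derivWithin_of_mem_nhds (Icc_mem_nhds hx.1 hx.2), hnhds.deriv_eq]
    exact hode x hx
  have heq' := heq.of_subset_closure (contDiffOn_zero.1 hv'')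
    (hφ.comp_continuousOn hvd.continuousOn) Ioo_subset_Icc_self (closure_Ioo hab.ne).ge
  exact ⟨(hvd t ht).hasDerivWithinAt, (hv'd t ht).hasDerivWithinAt.congr_deriv (heq' ht)⟩

lemma eqOn_of_hasDerivWithinAt_of_locallyLipschitz {E : Type*} [NormedAddCommGroup E]
    [NormedSpace ℝ E] {F : E → E} (hF : LocallyLipschitz F) {f g : ℝ → E} {a b : ℝ}
    (hf : ∀ t ∈ Icc a b, HasDerivWithinAt f (F (f t)) (Icc a b) t)
    (hg : ∀ t ∈ Icc a b, HasDerivWithinAt g (F (g t)) (Icc a b) t) (h0 : f a = g a) :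
    EqOn f g (Icc a b) := by
  have hfc : ContinuousOn f (Icc a b) := fun t ht => (hf t ht).continuousWithinAt
  have hgc : ContinuousOn g (Icc a b) := fun t ht => (hg t ht).continuousWithinAt
  set S := f '' Icc a b ∪ g '' Icc a b
  obtain ⟨K, hK⟩ := hF.locallyLipschitzOn.exists_lipschitzOnWith_of_compact
    ((isCompact_Icc.image_of_continuousOn hfc).union (isCompact_Icc.image_of_continuousOn hgc))
  have hIci {k : ℝ → E} (hk : ∀ t ∈ Icc a b, HasDerivWithinAt k (F (k t)) (Icc a b) t) :
      ∀ t ∈ Ico a b, HasDerivWithinAt k (F (k t)) (Ici t) t := fun t ht =>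
    (hk t (Ico_subset_Icc_self ht)).mono_of_mem_nhdsWithin (Icc_mem_nhdsGE_of_mem ht)
  exact ODE_solution_unique_of_mem_Icc_right (s := fun _ => S) (fun _ _ => hK)
    hfc (hIci hf) (fun t ht => Or.inl ⟨t, Ico_subset_Icc_self ht, rfl⟩)
    hgc (hIci hg) (fun t ht => Or.inr ⟨t, Ico_subset_Icc_self ht, rfl⟩) h0

def logisticField (a : ℝ) (z : ℝ × ℝ) : ℝ × ℝ := (z.2, -(z.1 * (a - z.1)))

lemma locallyLipschitz_logisticField (a : ℝ) : LocallyLipschitz (logisticField a) :=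
  ContDiff.locallyLipschitz (𝕂 := ℝ) (by unfold logisticField; fun_prop)

structure IsPositiveSolution (a h : ℝ) (u : ℝ → ℝ) : Prop where
  contDiffOn : ContDiffOn ℝ 2 u (Icc 0 h)
  pos : ∀ x ∈ Ico 0 h, 0 < u x
  ode : ∀ x ∈ Ioo 0 h, -(deriv (deriv u) x) = u x * (a - u x)
  neumann : derivWithin u (Icc 0 h) 0 = 0
  dirichlet : u h = 0

namespace IsPositiveSolution

variable {a h : ℝ} {u v : ℝ → ℝ}

lemma nonneg (hu : IsPositiveSolution a h u) {t : ℝ} (ht : t ∈ Icc 0 h) : 0 ≤ u t := by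
  rcases ht.2.eq_or_lt with rfl | hlt
  · exact hu.dirichlet.ge
  · exact (hu.pos t ⟨ht.1, hlt⟩).le

lemma hasDerivWithinAt (hh : 0 < h) (hu : IsPositiveSolution a h u) {t : ℝ} (ht : t ∈ Icc 0 h) :
    HasDerivWithinAt u (derivWithin u (Icc 0 h) t) (Icc 0 h) t ∧
      HasDerivWithinAt (derivWithin u (Icc 0 h)) (-(u t * (a - u t))) (Icc 0 h) t :=
  hasDerivWithinAt_derivWithin_of_contDiffOn (φ := fun y => -(y * (a - y))) hh hu.contDiffOn
    (by fun_prop) (fun x hx => by rw [← hu.ode x hx, neg_neg]) t ht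

lemma hasDerivWithinAt_logisticField (hh : 0 < h) (hu : IsPositiveSolution a h u) {t : ℝ}
    (ht : t ∈ Icc 0 h) :
    HasDerivWithinAt (fun s => (u s, derivWithin u (Icc 0 h) s))
      (logisticField a (u t, derivWithin u (Icc 0 h) t)) (Icc 0 h) t :=
  (hu.hasDerivWithinAt hh ht).1.prodMk (hu.hasDerivWithinAt hh ht).2

lemma apply_zero_le (hh : 0 < h) (hu : IsPositiveSolution a h u) (hv : IsPositiveSolution a h v) :
    u 0 ≤ v 0 := by
  by_contra! hlt
  set u' := derivWithin u (Icc 0 h)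
  set v' := derivWithin v (Icc 0 h)
  obtain ⟨ξ, ⟨hξ0, hξh⟩, hDξ, hDpos⟩ := exists_first_zero (f := fun t => u t - v t) hh.le
    (hu.contDiffOn.continuousOn.sub hv.contDiffOn.continuousOn) (sub_pos.2 hlt)
    (by simp [hu.dirichlet, hv.dirichlet])
  have hξ : ξ ∈ Icc 0 h := ⟨hξ0.le, hξh⟩
  have hsub : Icc 0 ξ ⊆ Icc 0 h := Icc_subset_Icc_right hξh
  set W : ℝ → ℝ := fun t => u' t * v t - v' t * u t
  have hW : ∀ t ∈ Icc 0 h, HasDerivWithinAt W (u t * v t * (u t - v t)) (Icc 0 h) t := by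
    intro t ht
    obtain ⟨hu₁, hu₂⟩ := hu.hasDerivWithinAt hh ht
    obtain ⟨hv₁, hv₂⟩ := hv.hasDerivWithinAt hh ht
    exact ((hu₂.mul hv₁).sub (hv₂.mul hu₁)).congr_deriv (by ring)
  have hW_mono : StrictMonoOn W (Icc 0 ξ) := by
    refine strictMonoOn_of_hasDerivWithinAt_pos (convex_Icc 0 ξ)
      (fun t ht => (hW t (hsub ht)).continuousWithinAt.mono hsub)
      (fun t ht => (hW t (hsub (interior_subset ht))).mono (interior_subset.trans hsub))
      (fun t ht => ?_)
    rw [interior_Icc] at ht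
    exact mul_pos (mul_pos (hu.pos t ⟨ht.1.le, ht.2.trans_le hξh⟩)
      (hv.pos t ⟨ht.1.le, ht.2.trans_le hξh⟩)) (hDpos t ⟨ht.1.le, ht.2⟩)
  have hW0 : W 0 = 0 := by simp [W, u', v', hu.neumann, hv.neumann]
  have hWξ : 0 < W ξ := hW0 ▸ hW_mono (left_mem_Icc.2 hξ0.le) (right_mem_Icc.2 hξ0.le) hξ0
  have hD' : u' ξ - v' ξ ≤ 0 := by
    refine (((hu.hasDerivWithinAt hh hξ).1.sub (hv.hasDerivWithinAt hh hξ).1).mono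
      hsub).nonpos_of_isMinOn_Icc hξ0 (isMinOn_iff.2 fun t ht => ?_)
    rcases ht.2.eq_or_lt with rfl | hlt
    · exact le_rfl
    · exact hDξ.trans_le (hDpos t ⟨ht.1, hlt⟩).le
  have hvξ : v ξ = u ξ := by linarith [show u ξ - v ξ = 0 from hDξ]
  have : W ξ = u ξ * (u' ξ - v' ξ) := by simp only [W, hvξ]; ring
  nlinarith [hu.nonneg hξ]

theorem eqOn (hh : 0 < h) (hu : IsPositiveSolution a h u) (hv : IsPositiveSolution a h v) :
    EqOn u v (Icc 0 h) := by
  have h0 : u 0 = v 0 := le_antisymm (hu.apply_zero_le hh hv) (hv.apply_zero_le hh hu)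
  have := eqOn_of_hasDerivWithinAt_of_locallyLipschitz (locallyLipschitz_logisticField a)
    (fun t ht => hu.hasDerivWithinAt_logisticField hh ht)
    (fun t ht => hv.hasDerivWithinAt_logisticField hh ht) (by rw [hu.neumann, hv.neumann, h0])
  exact fun t ht => congrArg Prod.fst (this ht)

end IsPositiveSolution

def clamp (lo hi x : ℝ) : ℝ := max lo (min x hi)

lemma clamp_of_mem {lo hi x : ℝ} (hx : x ∈ Icc lo hi) : clamp lo hi x = x := by
  simp [clamp, min_eq_left hx.2, max_eq_right hx.1]

lemma clamp_mem {lo hi : ℝ} (h : lo ≤ hi) (x : ℝ) : clamp lo hi x ∈ Icc lo hi :=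
  ⟨le_max_left _ _, max_le h (min_le_right _ _)⟩

lemma lipschitzWith_clamp (lo hi : ℝ) : LipschitzWith 1 (clamp lo hi) :=
  (LipschitzWith.id.min_const hi).const_max lo

def clampedLogistic (a u : ℝ) : ℝ := clamp 0 a u * (a - clamp 0 a u)

section ClampedLogistic

variable {a : ℝ}

lemma clampedLogistic_of_mem {u : ℝ} (hu : u ∈ Icc 0 a) : clampedLogistic a u = u * (a - u) := by
  rw [clampedLogistic, clamp_of_mem hu]

lemma clampedLogistic_nonneg (ha : 0 ≤ a) (u : ℝ) : 0 ≤ clampedLogistic a u :=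
  mul_nonneg (clamp_mem ha u).1 (sub_nonneg.2 (clamp_mem ha u).2)

lemma clampedLogistic_le (a u : ℝ) : clampedLogistic a u ≤ a ^ 2 / 4 := by
  unfold clampedLogistic; nlinarith [sq_nonneg (clamp 0 a u - a / 2)]

lemma lipschitzWith_clampedLogistic (ha : 0 ≤ a) :
    LipschitzWith a.toNNReal (clampedLogistic a) := by
  refine LipschitzWith.of_dist_le_mul fun u v => ?_
  obtain ⟨hu₀, hua⟩ := clamp_mem ha u
  obtain ⟨hv₀, hva⟩ := clamp_mem ha v
  have hclamp := (lipschitzWith_clamp 0 a).dist_le_mul u v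
  rw [NNReal.coe_one, one_mul, Real.dist_eq, Real.dist_eq] at hclamp
  rw [Real.coe_toNNReal _ ha, Real.dist_eq, Real.dist_eq]
  calc |clampedLogistic a u - clampedLogistic a v|
      = |clamp 0 a u - clamp 0 a v| * |a - clamp 0 a u - clamp 0 a v| := by
        rw [← abs_mul, clampedLogistic, clampedLogistic]; ring_nf
    _ ≤ |u - v| * a :=
        mul_le_mul hclamp (abs_le.2 ⟨by linarith, by linarith⟩) (abs_nonneg _) (abs_nonneg _)
    _ = a * |u - v| := mul_comm _ _

end ClampedLogistic

/-- A bounded, globally Lipschitz modification of `logisticField` (it agrees with it on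
`[0, a] × [-a²h, a²h]`), so that Picard–Lindelöf provides solutions on all of `[0, h]`. -/
def phaseField (a h : ℝ) (z : ℝ × ℝ) : ℝ × ℝ :=
  (clamp (-(a ^ 2 * h)) (a ^ 2 * h) z.2, -clampedLogistic a z.1)

lemma lipschitzWith_phaseField {a : ℝ} (ha : 0 ≤ a) (h : ℝ) :
    LipschitzWith (max 1 a.toNNReal) (phaseField a h) := by
  have h₁ := (lipschitzWith_clamp (-(a ^ 2 * h)) (a ^ 2 * h)).comp
    (LipschitzWith.prod_snd (α := ℝ) (β := ℝ))
  have h₂ := (lipschitzWith_clampedLogistic ha).neg.comp (LipschitzWith.prod_fst (α := ℝ) (β := ℝ))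
  rw [one_mul] at h₁
  rw [mul_one] at h₂
  exact h₁.prodMk h₂

lemma norm_phaseField_le {a h : ℝ} (ha : 0 ≤ a) (hh : 0 ≤ h) (z : ℝ × ℝ) :
    ‖phaseField a h z‖ ≤ a ^ 2 * (h + 1) := by
  obtain ⟨hlo, hhi⟩ := clamp_mem (x := z.2) (neg_le_self (by positivity : 0 ≤ a ^ 2 * h))
  rw [Prod.norm_def, Real.norm_eq_abs, Real.norm_eq_abs, phaseField, abs_neg,
    abs_of_nonneg (clampedLogistic_nonneg ha _)]
  refine max_le (abs_le.2 ⟨by nlinarith, by nlinarith⟩) ?_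
  nlinarith [clampedLogistic_le a z.1, sq_nonneg a]

structure IsShootingOrbit (a h c : ℝ) (X : ℝ → ℝ × ℝ) : Prop where
  init : X 0 = (c, 0)
  hasDerivAt : ∀ t ∈ Icc 0 h, HasDerivAt X (phaseField a h (X t)) t

lemma exists_isShootingOrbit {a h : ℝ} (ha : 0 ≤ a) (hh : 0 ≤ h) (c : ℝ) :
    ∃ X, IsShootingOrbit a h c X := by
  set L := a ^ 2 * (h + 1)
  have hL : 0 ≤ L := by positivity
  have hpl : IsPicardLindelof (fun _ => phaseField a h) (tmin := -1) (tmax := h + 1)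
      ⟨0, by constructor <;> linarith⟩ (c, 0) (L * (h + 1)).toNNReal 0 L.toNNReal
      (max 1 a.toNNReal) :=
    { lipschitzOnWith := fun _ _ => (lipschitzWith_phaseField ha h).lipschitzOnWith
      continuousOn := fun _ _ => continuousOn_const
      norm_le := fun _ _ z _ => by rw [Real.coe_toNNReal _ hL]; exact norm_phaseField_le ha hh z
      mul_max_le := by
        rw [Real.coe_toNNReal _ hL, Real.coe_toNNReal _ (by positivity)]
        simp [max_eq_left (by linarith : (1 : ℝ) ≤ h + 1)] }
  obtain ⟨X, hX0, hX⟩ := hpl.exists_eq_forall_mem_Icc_hasDerivWithinAt₀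
  exact ⟨X, hX0, fun t ht => (hX t ⟨by linarith [ht.1], by linarith [ht.2]⟩).hasDerivAt
    (Icc_mem_nhds (by linarith [ht.1]) (by linarith [ht.2]))⟩

noncomputable def logisticPotential (a s : ℝ) : ℝ := a * s ^ 2 / 2 - s ^ 3 / 3

lemma hasDerivAt_logisticPotential (a s : ℝ) :
    HasDerivAt (logisticPotential a) (s * (a - s)) s :=
  ((((hasDerivAt_pow 2 s).const_mul a).div_const 2).sub
    ((hasDerivAt_pow 3 s).div_const 3)).congr_deriv (by push_cast; ring)

lemma strictMonoOn_logisticPotential {a : ℝ} : StrictMonoOn (logisticPotential a) (Icc 0 a) :=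
  strictMonoOn_of_hasDerivWithinAt_pos (convex_Icc 0 a)
    (fun s _ => (hasDerivAt_logisticPotential a s).continuousAt.continuousWithinAt)
    (fun s _ => (hasDerivAt_logisticPotential a s).hasDerivWithinAt)
    fun s hs => by rw [interior_Icc] at hs; exact mul_pos hs.1 (sub_pos.2 hs.2)

lemma logisticPotential_mul_self (a l : ℝ) :
    logisticPotential a (l * a) = a ^ 3 * logisticPotential 1 l := by
  unfold logisticPotential; ring

namespace IsShootingOrbit

variable {a h c : ℝ} {X : ℝ → ℝ × ℝ}

lemma hasDerivAt_snd (hX : IsShootingOrbit a h c X) {t : ℝ} (ht : t ∈ Icc 0 h) :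
    HasDerivAt (fun s => (X s).2) (-clampedLogistic a (X t).1) t :=
  (hX.hasDerivAt t ht).snd

lemma abs_snd_le (ha : 0 ≤ a) (hX : IsShootingOrbit a h c X) {t : ℝ} (ht : t ∈ Icc 0 h) :
    |(X t).2| ≤ a ^ 2 / 4 * t := by
  have := norm_image_sub_le_of_norm_deriv_le_segment'
    (fun s hs => (hX.hasDerivAt_snd hs).hasDerivWithinAt)
    (fun s _ => by
      rw [norm_neg, Real.norm_eq_abs, abs_of_nonneg (clampedLogistic_nonneg ha _)]
      exact clampedLogistic_le a _) t ht
  simpa [hX.init] using this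

lemma hasDerivAt_fst (ha : 0 ≤ a) (hX : IsShootingOrbit a h c X) {t : ℝ} (ht : t ∈ Icc 0 h) :
    HasDerivAt (fun s => (X s).1) (X t).2 t := by
  have hp := abs_le.1 ((hX.abs_snd_le ha ht).trans
    (by nlinarith [ht.1, ht.2, sq_nonneg a] : a ^ 2 / 4 * t ≤ a ^ 2 * h))
  simpa only [phaseField, clamp_of_mem hp] using (hX.hasDerivAt t ht).fst

lemma snd_antitoneOn (ha : 0 ≤ a) (hX : IsShootingOrbit a h c X) :
    AntitoneOn (fun s => (X s).2) (Icc 0 h) :=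
  antitoneOn_Icc_of_hasDerivAt (fun _ ht => hX.hasDerivAt_snd ht)
    fun _ _ => neg_nonpos.2 (clampedLogistic_nonneg ha _)

lemma snd_nonpos (ha : 0 ≤ a) (hX : IsShootingOrbit a h c X) {t : ℝ} (ht : t ∈ Icc 0 h) :
    (X t).2 ≤ 0 := by
  simpa [hX.init] using hX.snd_antitoneOn ha ⟨le_rfl, ht.1.trans ht.2⟩ ht ht.1

lemma fst_antitoneOn (ha : 0 ≤ a) (hX : IsShootingOrbit a h c X) :
    AntitoneOn (fun s => (X s).1) (Icc 0 h) :=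
  antitoneOn_Icc_of_hasDerivAt (fun _ ht => hX.hasDerivAt_fst ha ht)
    fun _ ht => hX.snd_nonpos ha (Ioo_subset_Icc_self ht)

lemma fst_le (ha : 0 ≤ a) (hX : IsShootingOrbit a h c X) {t : ℝ} (ht : t ∈ Icc 0 h) :
    (X t).1 ≤ c := by
  simpa [hX.init] using hX.fst_antitoneOn ha ⟨le_rfl, ht.1.trans ht.2⟩ ht ht.1

/-- Once the orbit leaves `u > 0` it has `u' < 0`, and `u'` can only decrease afterwards. -/
lemma fst_lt_zero_of_fst_nonpos (ha : 0 ≤ a) (hX : IsShootingOrbit a h c X) (hc : 0 < c)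
    (hca : c < a) {t₀ : ℝ} (ht₀ : t₀ ∈ Ico 0 h) (hu : (X t₀).1 ≤ 0) : (X h).1 < 0 := by
  have hsub : Icc 0 t₀ ⊆ Icc 0 h := Icc_subset_Icc_right ht₀.2.le
  obtain ⟨τ, ⟨hτ0, hτt₀⟩, huτ, hupos⟩ := exists_first_zero ht₀.1
    (fun t ht => (hX.hasDerivAt_fst ha (hsub ht)).continuousAt.continuousWithinAt)
    (by simpa [hX.init] using hc) hu
  have hτ : τ ∈ Icc 0 h := ⟨hτ0.le, hτt₀.trans ht₀.2.le⟩
  have hpτ : (X τ).2 < 0 := by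
    have hanti := strictAntiOn_Icc_of_hasDerivAt (a := 0) (b := τ)
      (fun t ht => hX.hasDerivAt_snd ⟨ht.1, ht.2.trans hτ.2⟩) fun t ht => by
        have hut := hupos t ⟨ht.1.le, ht.2⟩
        rw [clampedLogistic_of_mem ⟨hut.le, (hX.fst_le ha ⟨ht.1.le, ht.2.le.trans hτ.2⟩).trans
          hca.le⟩]
        nlinarith [hX.fst_le ha ⟨ht.1.le, ht.2.le.trans hτ.2⟩]
    simpa [hX.init] using hanti (left_mem_Icc.2 hτ0.le) (right_mem_Icc.2 hτ0.le) hτ0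
  have hanti := strictAntiOn_Icc_of_hasDerivAt (a := τ) (b := h)
    (fun t ht => hX.hasDerivAt_fst ha ⟨hτ0.le.trans ht.1, ht.2⟩) fun t ht =>
      (hX.snd_antitoneOn ha hτ ⟨hτ0.le.trans ht.1.le, ht.2.le⟩ ht.1.le).trans_lt hpτ
  simpa [huτ] using hanti (left_mem_Icc.2 hτ.2) (right_mem_Icc.2 hτ.2) (hτt₀.trans_lt ht₀.2)

/-- Sturm comparison with `sin (k t)`, which solves `y'' = -k² y` and vanishes at `0` and `π / k`:
as `k² ≤ a - u` while `0 < u ≤ c`, `u` oscillates faster and vanishes first. -/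
lemma exists_fst_nonpos (ha : 0 ≤ a) (hX : IsShootingOrbit a h c X) (hc : 0 < c) (hca : c < a)
    {k : ℝ} (hk : 0 < k) (hkc : k ^ 2 ≤ a - c) (hkh : π / k ≤ h) :
    ∃ t ∈ Icc 0 (π / k), (X t).1 ≤ 0 := by
  by_contra! hpos
  have hsub : Icc 0 (π / k) ⊆ Icc 0 h := Icc_subset_Icc_right hkh
  have hkπ : k * (π / k) = π := by field_simp
  have hT : 0 ≤ π / k := by positivity
  set g : ℝ → ℝ := fun t => (X t).2 * sin (k * t) - k * (X t).1 * cos (k * t)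
  have hg : ∀ t ∈ Icc 0 (π / k),
      HasDerivAt g ((X t).1 * ((X t).1 - a + k ^ 2) * sin (k * t)) t := by
    intro t ht
    have hu := hX.hasDerivAt_fst ha (hsub ht)
    have hp := hX.hasDerivAt_snd (hsub ht)
    rw [clampedLogistic_of_mem ⟨(hpos t ht).le, (hX.fst_le ha (hsub ht)).trans hca.le⟩] at hp
    have hkt := (hasDerivAt_id t).const_mul k
    exact ((hp.mul hkt.sin).sub ((hu.const_mul k).mul hkt.cos)).congr_deriv (by simp; ring)
  have hanti := antitoneOn_Icc_of_hasDerivAt hg fun t ht => by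
    have hsin : 0 ≤ sin (k * t) := sin_nonneg_of_nonneg_of_le_pi (by nlinarith [ht.1])
      (by nlinarith [ht.2])
    have hu := hpos t (Ioo_subset_Icc_self ht)
    have huc := hX.fst_le ha (hsub (Ioo_subset_Icc_self ht))
    exact mul_nonpos_of_nonpos_of_nonneg (mul_nonpos_of_nonneg_of_nonpos hu.le (by linarith)) hsin
  have := hanti (left_mem_Icc.2 hT) (right_mem_Icc.2 hT) hT
  simp only [g, hkπ, sin_pi, cos_pi, mul_zero, sin_zero, cos_zero, hX.init] at this
  nlinarith [hpos _ (right_mem_Icc.2 hT)]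

lemma fst_lt_zero_of_sq_le (ha : 0 ≤ a) (hX : IsShootingOrbit a h c X) (hc : 0 < c)
    (hca : c < a) {k : ℝ} (hk : 0 < k) (hkc : k ^ 2 ≤ a - c) (hkh : π / k < h) : (X h).1 < 0 := by
  obtain ⟨t, ht, hut⟩ := hX.exists_fst_nonpos ha hc hca hk hkc hkh.le
  exact hX.fst_lt_zero_of_fst_nonpos ha hc hca ⟨ht.1, ht.2.trans_lt hkh⟩ hut

lemma snd_sq (ha : 0 ≤ a) (hX : IsShootingOrbit a h c X) (hca : c ≤ a)
    (hu : ∀ t ∈ Icc 0 h, 0 ≤ (X t).1) {t : ℝ} (ht : t ∈ Icc 0 h) :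
    (X t).2 ^ 2 = 2 * (logisticPotential a c - logisticPotential a (X t).1) := by
  set E : ℝ → ℝ := fun s => (X s).2 ^ 2 + 2 * logisticPotential a (X s).1
  have hE : ∀ s ∈ Icc 0 h, HasDerivAt E 0 s := by
    intro s hs
    have hp := hX.hasDerivAt_snd hs
    rw [clampedLogistic_of_mem ⟨hu s hs, (hX.fst_le ha hs).trans hca⟩] at hp
    exact ((hp.pow 2).add (((hasDerivAt_logisticPotential a _).comp s
      (hX.hasDerivAt_fst ha hs)).const_mul 2)).congr_deriv (by push_cast; ring)
  have := constant_of_has_deriv_right_zero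
    (fun s hs => (hE s hs).continuousAt.continuousWithinAt)
    (fun s hs => (hE s (Ico_subset_Icc_self hs)).hasDerivWithinAt) t ht
  simp only [E, hX.init] at this
  linarith

/-- Where `u ≤ s`, `snd_sq` forces `u' ≤ -√(2 (F c - F s))` with `F = logisticPotential a`, so `u`
cannot descend from `s` to `0` within time `ε`. -/
lemma lt_fst_of_sq_lt (ha : 0 ≤ a) (hX : IsShootingOrbit a h c X) (hca : c ≤ a)
    (hu : ∀ t ∈ Icc 0 h, 0 ≤ (X t).1) (hXh : (X h).1 = 0) {s ε : ℝ} (hs : 0 ≤ s) (hsa : s ≤ a)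
    (hε : 0 ≤ ε) (hgap : s ^ 2 < 2 * (logisticPotential a c - logisticPotential a s) * ε ^ 2)
    {x : ℝ} (hx : x ∈ Icc 0 (h - ε)) : s < (X x).1 := by
  by_contra! hxs
  have hxh : x ∈ Icc 0 h := ⟨hx.1, by linarith [hx.2]⟩
  have hsub : Icc x h ⊆ Icc 0 h := Icc_subset_Icc_left hx.1
  set m := √(2 * (logisticPotential a c - logisticPotential a s))
  have hm : 0 ≤ m := sqrt_nonneg _
  have hslope : ∀ t ∈ Icc x h, (X t).2 ≤ -m := by
    intro t ht
    have hut : (X t).1 ≤ s := (hX.fst_antitoneOn ha hxh (hsub ht) ht.1).trans hxs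
    have hF : logisticPotential a (X t).1 ≤ logisticPotential a s :=
      strictMonoOn_logisticPotential.monotoneOn ⟨hu t (hsub ht), hut.trans hsa⟩ ⟨hs, hsa⟩ hut
    have : m ≤ |(X t).2| := by
      rw [← sqrt_sq_eq_abs, hX.snd_sq ha hca hu (hsub ht)]
      exact sqrt_le_sqrt (by linarith)
    rw [abs_of_nonpos (hX.snd_nonpos ha (hsub ht))] at this
    linarith
  have hanti := antitoneOn_Icc_of_hasDerivAt (f := fun t => (X t).1 + m * t)
    (fun t ht => (hX.hasDerivAt_fst ha (hsub ht)).add ((hasDerivAt_id t).const_mul m))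
    fun t ht => by linarith [hslope t (Ioo_subset_Icc_self ht)]
  have := hanti (left_mem_Icc.2 hxh.2) (right_mem_Icc.2 hxh.2) hxh.2
  simp only [hXh] at this
  have hmε : m * ε ≤ s := by nlinarith [hx.2]
  have hm2 : m ^ 2 = 2 * (logisticPotential a c - logisticPotential a s) :=
    sq_sqrt (by nlinarith [sq_nonneg s, sq_nonneg ε])
  nlinarith [mul_nonneg hm hε]

lemma dist_le (ha : 0 ≤ a) (hX : IsShootingOrbit a h c X) {c' : ℝ} {Y : ℝ → ℝ × ℝ}
    (hY : IsShootingOrbit a h c' Y) {t : ℝ} (ht : t ∈ Icc 0 h) :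
    dist (X t) (Y t) ≤ dist c c' * exp (max 1 a.toNNReal * t) := by
  have hcont {Z : ℝ → ℝ × ℝ} {d : ℝ} (hZ : IsShootingOrbit a h d Z) : ContinuousOn Z (Icc 0 h) :=
    fun t ht => (hZ.hasDerivAt t ht).continuousAt.continuousWithinAt
  have hIci {Z : ℝ → ℝ × ℝ} {d : ℝ} (hZ : IsShootingOrbit a h d Z) :
      ∀ t ∈ Ico 0 h, HasDerivWithinAt Z (phaseField a h (Z t)) (Ici t) t :=
    fun t ht => (hZ.hasDerivAt t (Ico_subset_Icc_self ht)).hasDerivWithinAt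
  simpa using dist_le_of_trajectories_ODE (v := fun _ => phaseField a h)
    (fun _ => lipschitzWith_phaseField ha h) (hcont hX) (hIci hX) (hcont hY) (hIci hY)
    (by rw [hX.init, hY.init, Prod.dist_eq]; simp) t ht

theorem isPositiveSolution (ha : 0 ≤ a) (hh : 0 < h) (hX : IsShootingOrbit a h c X) (hc : 0 < c)
    (hca : c < a) (hXh : (X h).1 = 0) : IsPositiveSolution a h fun t => (X t).1 := by
  have hpos : ∀ t ∈ Ico 0 h, 0 < (X t).1 := fun t ht =>
    lt_of_not_ge fun hut => (hX.fst_lt_zero_of_fst_nonpos ha hc hca ht hut).ne hXh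
  have hmem : ∀ t ∈ Icc 0 h, (X t).1 ∈ Icc 0 a := by
    intro t ht
    refine ⟨?_, (hX.fst_le ha ht).trans hca.le⟩
    rcases ht.2.eq_or_lt with rfl | hlt
    · exact hXh.ge
    · exact (hpos t ⟨ht.1, hlt⟩).le
  have hu := fun t (ht : t ∈ Icc 0 h) => hX.hasDerivAt_fst ha ht
  have hp : ∀ t ∈ Icc 0 h, HasDerivAt (fun s => (X s).2) (-((X t).1 * (a - (X t).1))) t :=
    fun t ht => clampedLogistic_of_mem (hmem t ht) ▸ hX.hasDerivAt_snd ht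
  have hucont : ContinuousOn (fun t => (X t).1) (Icc 0 h) :=
    fun t ht => (hu t ht).continuousAt.continuousWithinAt
  refine ⟨contDiffOn_two_of_hasDerivWithinAt (uniqueDiffOn_Icc hh)
    (fun t ht => (hu t ht).hasDerivWithinAt) (fun t ht => (hp t ht).hasDerivWithinAt)
    (hucont.mul (continuousOn_const.sub hucont)).neg, hpos, fun x hx => ?_, ?_, hXh⟩
  · have : deriv (fun t => (X t).1) =ᶠ[𝓝 x] fun t => (X t).2 :=
      eventually_of_mem (isOpen_Ioo.mem_nhds hx) fun y hy => (hu y (Ioo_subset_Icc_self hy)).deriv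
    rw [this.deriv_eq, (hp x (Ioo_subset_Icc_self hx)).deriv, neg_neg]
  · have h0 : (0 : ℝ) ∈ Icc 0 h := left_mem_Icc.2 hh.le
    rw [(hu 0 h0).hasDerivWithinAt.derivWithin (uniqueDiffOn_Icc hh 0 h0), hX.init]

end IsShootingOrbit

lemma isShootingOrbit_const {a h : ℝ} (ha : 0 ≤ a) (hh : 0 ≤ h) :
    IsShootingOrbit a h a fun _ => (a, 0) where
  init := rfl
  hasDerivAt t _ := by
    have h0 : (0 : ℝ) ∈ Icc (-(a ^ 2 * h)) (a ^ 2 * h) :=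
      ⟨neg_nonpos.2 (by positivity), by positivity⟩
    have : phaseField a h (a, 0) = 0 := by
      simp [phaseField, clamp_of_mem h0, clampedLogistic_of_mem ⟨ha, le_rfl⟩]
    rw [this]
    exact hasDerivAt_const t _

theorem exists_isShootingOrbit_fst_eq_zero {a h c₀ : ℝ} (ha : 0 < a) (hh : 0 ≤ h) (hc₀ : c₀ ≤ a)
    (hneg : ∀ X, IsShootingOrbit a h c₀ X → (X h).1 < 0) :
    ∃ c X, IsShootingOrbit a h c X ∧ c₀ ≤ c ∧ c < a ∧ (X h).1 = 0 := by
  choose X hX using fun c => exists_isShootingOrbit (h := h) ha.le hh c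
  have hlip : LipschitzWith (exp (max 1 a.toNNReal * h)).toNNReal fun c => X c h :=
    LipschitzWith.of_dist_le_mul fun c c' => by
      rw [Real.coe_toNNReal _ (exp_pos _).le, mul_comm]
      exact (hX c).dist_le ha.le (hX c') ⟨hh, le_rfl⟩
  have hXa : X a h = (a, 0) := by
    simpa using (hX a).dist_le ha.le (isShootingOrbit_const ha.le hh) ⟨hh, le_rfl⟩
  obtain ⟨c, hc, hXc⟩ := intermediate_value_Icc hc₀
    (continuous_fst.comp hlip.continuous).continuousOn
    ⟨(hneg _ (hX c₀)).le, by simpa [hXa] using ha.le⟩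
  refine ⟨c, X c, hX c, hc.1, hc.2.lt_of_ne ?_, hXc⟩
  rintro rfl
  simp only [Function.comp_apply, hXa] at hXc
  exact ha.ne' hXc

theorem exists_isPositiveSolution_one_sub_mul_lt {a h η ε : ℝ} (ha : 0 < a) (hh : 0 < h)
    (hη1 : η ≤ 1) (hε : 0 < ε) (hosc : 8 * π ^ 2 < a * (η * h ^ 2))
    (hgap : 1 < a * (2 * (logisticPotential 1 (1 - η / 2) - logisticPotential 1 (1 - η)) * ε ^ 2)) :
    ∃ u, IsPositiveSolution a h u ∧ ∀ x ∈ Icc 0 (h - ε), (1 - η) * a < u x ∧ u x < a := by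
  -- Sturm comparison with `sin (2π t / h)`, whose first zero `h / 2` comes before `h`
  have hk : (2 * π / h) ^ 2 ≤ a - (1 - η / 2) * a := by
    rw [div_pow, div_le_iff₀ (by positivity)]
    nlinarith
  have hkh : π / (2 * π / h) < h := by
    rw [show π / (2 * π / h) = h / 2 by field_simp]
    linarith
  have hc₀ : 0 < (1 - η / 2) * a := mul_pos (by linarith) ha
  have hs₀ : 0 ≤ (1 - η) * a := mul_nonneg (by linarith) ha.le
  have hsc₀ : (1 - η) * a ≤ (1 - η / 2) * a := by nlinarith
  obtain ⟨c, X, hX, hc₀c, hca, hXh⟩ := exists_isShootingOrbit_fst_eq_zero ha hh.le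
    (by nlinarith : (1 - η / 2) * a ≤ a) fun Y hY => hY.fst_lt_zero_of_sq_le ha.le hc₀
      (by nlinarith) (by positivity) hk hkh
  have hsol := hX.isPositiveSolution ha.le hh (hc₀.trans_le hc₀c) hca hXh
  refine ⟨_, hsol, fun x hx => ⟨hX.lt_fst_of_sq_lt ha.le hca.le (fun t ht => hsol.nonneg ht) hXh
    hs₀ (by linarith) hε.le ?_ hx,
    (hX.fst_le ha.le ⟨hx.1, by linarith [hx.2]⟩).trans_lt hca⟩⟩
  have hF := strictMonoOn_logisticPotential.monotoneOn ⟨hc₀.le, by linarith⟩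
    ⟨by linarith, hca.le⟩ hc₀c
  rw [logisticPotential_mul_self] at hF ⊢
  have h₁ : ((1 - η) * a) ^ 2 ≤ a ^ 2 := pow_le_pow_left₀ hs₀ (by linarith) 2
  have h₂ := lt_mul_of_one_lt_right (by positivity : 0 < a ^ 2) hgap
  nlinarith [sq_nonneg ε]

end EllipticSteadyState

open EllipticSteadyState in
theorem elliptic_steady_state_asymptotics_general (h ε : ℝ) (hh : 0 < h) (hε : 0 < ε) :
    ∀ δ : ℝ, 0 < δ → ∃ A : ℝ, ∀ a : ℝ, A < a →
      ∃ u : ℝ → ℝ,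
        ContDiffOn ℝ 2 u (Set.Icc 0 h) ∧
        (∀ x ∈ Set.Ico (0:ℝ) h, 0 < u x) ∧
        (∀ x ∈ Set.Ioo (0:ℝ) h, -(deriv (deriv u) x) = u x * (a - u x)) ∧
        derivWithin u (Set.Icc 0 h) 0 = 0 ∧
        u h = 0 ∧
        (∀ x ∈ Set.Icc (0:ℝ) (h - ε), |u x / a - 1| < δ) ∧
        (∀ v : ℝ → ℝ,
          ContDiffOn ℝ 2 v (Set.Icc 0 h) →
          (∀ x ∈ Set.Ico (0:ℝ) h, 0 < v x) →
          (∀ x ∈ Set.Ioo (0:ℝ) h, -(deriv (deriv v) x) = v x * (a - v x)) →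
          derivWithin v (Set.Icc 0 h) 0 = 0 →
          v h = 0 →
          ∀ x ∈ Set.Icc (0:ℝ) h, v x = u x) := by
  intro δ hδ
  set η := min δ 1
  have hη : 0 < η := lt_min hδ one_pos
  have hη1 : η ≤ 1 := min_le_right δ 1
  set κ := logisticPotential 1 (1 - η / 2) - logisticPotential 1 (1 - η)
  have hκ : 0 < κ := sub_pos.2 <| strictMonoOn_logisticPotential
    ⟨by linarith, by linarith⟩ ⟨by linarith, by linarith⟩ (by linarith)
  refine ⟨max (8 * π ^ 2 / (η * h ^ 2)) (1 / (2 * κ * ε ^ 2)), fun a ha => ?_⟩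
  rw [max_lt_iff, div_lt_iff₀ (by positivity), div_lt_iff₀ (by positivity)] at ha
  have ha₀ : 0 < a := pos_of_mul_pos_left (one_pos.trans ha.2) (by positivity)
  obtain ⟨u, hu, hbound⟩ := exists_isPositiveSolution_one_sub_mul_lt ha₀ hh hη1 hε ha.1
    ha.2
  refine ⟨u, hu.contDiffOn, hu.pos, hu.ode, hu.neumann, hu.dirichlet, fun x hx => ?_,
    fun v hv₁ hv₂ hv₃ hv₄ hv₅ => (hu.eqOn hh ⟨hv₁, hv₂, hv₃, hv₄, hv₅⟩).symm⟩
  obtain ⟨hlo, hhi⟩ := hbound x hx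
  have h₁ : u x / a < 1 := (div_lt_one ha₀).2 hhi
  have h₂ : 1 - η < u x / a := (lt_div_iff₀ ha₀).2 hlo
  rw [abs_sub_lt_iff]
  constructor <;> linarith [min_le_left δ 1]

/-- Asymptotics of the elliptic steady state (Appendix Theorem): fix `h > 0` and
`ε ∈ (0,h)`. For every `δ > 0` there is `A` such that for all `a > A` the problem
`-u'' = u(a-u)` on `(0,h)`, `u'(0) = 0`, `u(h) = 0` has a unique positive solution `û`,
and `|û(x)/a - 1| < δ` for all `x ∈ [0, h-ε]` (i.e. `û = a - g_a` with `g_a/a → 0`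
uniformly on `[0, h-ε]`). -/
theorem elliptic_steady_state_asymptotics (h ε : ℝ) (hh : 0 < h) (hε : 0 < ε)
    (hεh : ε < h) :
    ∀ δ : ℝ, 0 < δ → ∃ A : ℝ, ∀ a : ℝ, A < a →
      ∃ u : ℝ → ℝ,
        ContDiffOn ℝ 2 u (Set.Icc 0 h) ∧
        (∀ x ∈ Set.Ico (0:ℝ) h, 0 < u x) ∧
        (∀ x ∈ Set.Ioo (0:ℝ) h, -(deriv (deriv u) x) = u x * (a - u x)) ∧
        derivWithin u (Set.Icc 0 h) 0 = 0 ∧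
        u h = 0 ∧
        (∀ x ∈ Set.Icc (0:ℝ) (h - ε), |u x / a - 1| < δ) ∧
        (∀ v : ℝ → ℝ,
          ContDiffOn ℝ 2 v (Set.Icc 0 h) →
          (∀ x ∈ Set.Ico (0:ℝ) h, 0 < v x) →
          (∀ x ∈ Set.Ioo (0:ℝ) h, -(deriv (deriv v) x) = v x * (a - v x)) →
          derivWithin v (Set.Icc 0 h) 0 = 0 →
          v h = 0 →
          ∀ x ∈ Set.Icc (0:ℝ) h, v x = u x) :=
  elliptic_steady_state_asymptotics_general h ε hh hε
end

section
/- Delta sequence (Appendix Lemma): For n ∈ ℕ define S_n(x) = n(e^{-nx} - e^{-n²x}) for x ≥ 0 and S_n(x) = 0 for x < 0. Then for every bounded function f : ℝ → ℝ that is continuous at 0, lim_{n→∞} ∫_{-∞}^{∞} f(x) S_n(x) dx = f(0). -/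
/-!
Substituting `y = c x` turns `∫₀^∞ f(x) c e^{-cx} dx` into `∫₀^∞ f(y/c) e^{-y} dy`, which tends to
`f(0) ∫₀^∞ e^{-y} dy = f(0)` as `c → ∞` by dominated convergence. Since
`S_n(x) = n e^{-nx} - n⁻¹ · n² e^{-n²x}` on `x ≥ 0`, the integral against `S_n` is the average at rate `n`
minus `n⁻¹` times the average at rate `n²`, hence tends to `f(0) - 0 · f(0)`.
-/

open Real Filter MeasureTheory

/-- The delta sequence `S_n(x) = n(e^{-nx} - e^{-n²x})` for `x ≥ 0`, `0` for `x < 0`. -/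
noncomputable def Sseq (n : ℕ) (x : ℝ) : ℝ :=
  if 0 ≤ x then (n : ℝ) * (Real.exp (-(n : ℝ) * x) - Real.exp (-(n : ℝ) ^ 2 * x)) else 0

open Set Topology

variable {E : Type*} [NormedAddCommGroup E] [NormedSpace ℝ E]

noncomputable def expAverage (f : ℝ → E) (c : ℝ) : E :=
  ∫ x in Ioi 0, (c * exp (-c * x)) • f x

lemma integrableOn_Ioi_mul_exp_neg_smul {f : ℝ → E} {C : ℝ} (hf : AEStronglyMeasurable f)
    (hC : ∀ x, ‖f x‖ ≤ C) {c : ℝ} (hc : 0 ≤ c) :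
    IntegrableOn (fun x => (c * exp (-c * x)) • f x) (Ioi 0) := by
  rcases hc.eq_or_lt with rfl | hc
  · simp
  · exact ((exp_neg_integrableOn_Ioi 0 hc).const_mul c).smul_bdd C hf.restrict (ae_of_all _ hC)

lemma expAverage_eq_integral_comp_div (f : ℝ → E) {c : ℝ} (hc : 0 < c) :
    expAverage f c = ∫ y in Ioi 0, exp (-y) • f (y / c) := by
  have hsub := integral_comp_mul_left_Ioi (fun y => exp (-y) • f (y / c)) 0 hc
  simp only [mul_zero, mul_div_cancel_left₀ _ hc.ne', ← neg_mul] at hsub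
  simp_rw [expAverage, mul_smul]
  rw [integral_smul, hsub, smul_inv_smul₀ hc.ne']

theorem tendsto_expAverage_atTop [CompleteSpace E] {f : ℝ → E} {C : ℝ} (hf : AEStronglyMeasurable f)
    (hC : ∀ x, ‖f x‖ ≤ C) (h0 : ContinuousAt f 0) :
    Tendsto (expAverage f) atTop (𝓝 (f 0)) := by
  have hlimit : ∫ y in Ioi 0, exp (-y) • f 0 = f 0 := by
    rw [integral_smul_const, integral_exp_neg_Ioi_zero, one_smul]
  rw [← hlimit]
  refine Tendsto.congr' ((eventually_gt_atTop 0).mono fun c hc =>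
    (expAverage_eq_integral_comp_div f hc).symm) ?_
  refine tendsto_integral_filter_of_dominated_convergence (fun y => C * exp (-y)) ?_ ?_
    ((integrableOn_exp_neg_Ioi 0).const_mul C) (ae_of_all _ fun y => ?_)
  · filter_upwards [eventually_gt_atTop 0] with c hc
    have hscale := hf.comp_quasiMeasurePreserving
      (Measure.quasiMeasurePreserving_smul volume (inv_ne_zero hc.ne'))
    simp only [Function.comp_def, smul_eq_mul, inv_mul_eq_div] at hscale
    exact (continuous_exp.comp continuous_neg).aestronglyMeasurable.smul hscale.restrict
  · refine Eventually.of_forall fun c => ae_of_all _ fun y => ?_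
    rw [norm_smul, norm_of_nonneg (exp_pos _).le, mul_comm]
    exact mul_le_mul_of_nonneg_right (hC _) (exp_pos _).le
  · exact (h0.tendsto.comp (tendsto_const_nhds.div_atTop tendsto_id)).const_smul (exp (-y))

lemma Sseq_eq_of_nonneg (n : ℕ) {x : ℝ} (hx : 0 ≤ x) :
    Sseq n x = n * exp (-n * x) - (n : ℝ)⁻¹ * ((n : ℝ) ^ 2 * exp (-(n : ℝ) ^ 2 * x)) := by
  rcases eq_or_ne (n : ℝ) 0 with hn | hn
  · simp [Sseq, hn]
  · rw [Sseq, if_pos hx]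
    field_simp

lemma integral_Sseq_smul {f : ℝ → E} {C : ℝ} (hf : AEStronglyMeasurable f)
    (hC : ∀ x, ‖f x‖ ≤ C) (n : ℕ) :
    ∫ x, Sseq n x • f x = expAverage f n - (n : ℝ)⁻¹ • expAverage f ((n : ℝ) ^ 2) := by
  have hSseq : (fun x => Sseq n x • f x) = (Ici 0).indicator fun x => Sseq n x • f x := by
    ext x
    by_cases hx : 0 ≤ x <;> simp [Sseq, hx]
  rw [hSseq, integral_indicator measurableSet_Ici, integral_Ici_eq_integral_Ioi, expAverage,
    expAverage, ← integral_smul, ← integral_sub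
      (integrableOn_Ioi_mul_exp_neg_smul hf hC n.cast_nonneg)
      ((integrableOn_Ioi_mul_exp_neg_smul hf hC (sq_nonneg (n : ℝ))).fun_smul _)]
  refine setIntegral_congr_fun measurableSet_Ioi fun x hx => ?_
  simp only [Sseq_eq_of_nonneg n (le_of_lt hx), sub_smul, smul_smul]

/-- Delta sequence property: for every bounded measurable `f` continuous at `0`,
`∫_ℝ f(x) S_n(x) dx → f(0)`. -/
theorem delta_sequence (f : ℝ → ℝ) (hf : Measurable f)
    (hbd : ∃ C : ℝ, ∀ x : ℝ, |f x| ≤ C) (hcont : ContinuousAt f 0) :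
    Tendsto (fun n : ℕ => ∫ x : ℝ, f x * Sseq n x) atTop (nhds (f 0)) := by
  obtain ⟨C, hC⟩ := hbd
  have hC' : ∀ x, ‖f x‖ ≤ C := by simpa only [Real.norm_eq_abs] using hC
  have hA := tendsto_expAverage_atTop hf.aestronglyMeasurable hC' hcont
  have hn : Tendsto (fun n : ℕ => (n : ℝ)) atTop atTop := tendsto_natCast_atTop_atTop
  have hlim := (hA.comp hn).sub ((tendsto_inv_atTop_zero.comp hn).smul
    (hA.comp ((tendsto_pow_atTop two_ne_zero).comp hn)))
  rw [zero_smul, sub_zero] at hlim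
  refine hlim.congr fun n => ?_
  simpa only [Function.comp_apply, smul_eq_mul, mul_comm (f _)] using
    (integral_Sseq_smul hf.aestronglyMeasurable hC' n).symm
end

section
/- Positivity of the leading coefficient for large a (inequality (2.13)): Let D > 0, c_1 > c_2 > 0 and α_1 > α_2 > 0. Then for all sufficiently large a > 0, (c_1√(a/D) - c_1 α_1 e^{-(π/2)√(D/a)·α_1})/(α_1² + a/D) - (c_2√(a/D) - c_2 α_2 e^{-(π/2)√(D/a)·α_2})/(α_2² + a/D) > 0. -/
/-! With `s = √(a/D) → ∞` and convergent exponential factors `E`, each quotient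
`(c s - c α E) / (α² + s²)` equals `c / s + O(1 / s²)`. Hence `s` times the difference of the
two quotients tends to `c₁ - c₂ > 0`, so the difference is positive for large `a`. -/

open Real Filter Topology

theorem tendsto_mul_sub_div_sq_add_sq {ι : Type*} {l : Filter ι} {s E : ι → ℝ} {e : ℝ}
    (c α : ℝ) (hs : Tendsto s l atTop) (hE : Tendsto E l (𝓝 e)) :
    Tendsto (fun i => s i * ((c * s i - c * α * E i) / (α ^ 2 + s i ^ 2))) l (𝓝 c) := by
  have hinv : Tendsto (fun i => (s i)⁻¹) l (𝓝 0) := tendsto_inv_atTop_zero.comp hs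
  have hlim : Tendsto (fun i => (c - c * α * E i * (s i)⁻¹) / (1 + α ^ 2 * (s i)⁻¹ ^ 2)) l
      (𝓝 ((c - c * α * e * 0) / (1 + α ^ 2 * 0 ^ 2))) :=
    ((tendsto_const_nhds.sub ((tendsto_const_nhds.mul hE).mul hinv)).div
      (tendsto_const_nhds.add (tendsto_const_nhds.mul (hinv.pow 2))) (by norm_num))
  rw [show (c - c * α * e * 0) / (1 + α ^ 2 * 0 ^ 2) = c by simp] at hlim
  refine hlim.congr' ?_
  filter_upwards [hs.eventually_gt_atTop 0] with i hi
  field_simp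
  ring

theorem tendsto_sqrt_div_const_atTop {D : ℝ} (hD : 0 < D) :
    Tendsto (fun a => √(a / D)) atTop atTop :=
  tendsto_sqrt_atTop.comp (tendsto_id.atTop_div_const hD)

theorem tendsto_sqrt_const_div_atTop_nhds_zero (D : ℝ) :
    Tendsto (fun a => √(D / a)) atTop (𝓝 0) := by
  simpa using ((tendsto_const_nhds (x := D)).div_atTop tendsto_id).sqrt

theorem leading_coefficient_positive_general (D c₁ c₂ α₁ α₂ : ℝ) (hD : 0 < D)
    (hc : c₁ > c₂) :
    ∃ A : ℝ, ∀ a : ℝ, A < a →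
      0 < (c₁ * Real.sqrt (a / D) - c₁ * α₁ * Real.exp (-(π / 2) * Real.sqrt (D / a) * α₁))
            / (α₁ ^ 2 + a / D)
          - (c₂ * Real.sqrt (a / D) - c₂ * α₂ * Real.exp (-(π / 2) * Real.sqrt (D / a) * α₂))
            / (α₂ ^ 2 + a / D) := by
  have hs := tendsto_sqrt_div_const_atTop hD
  have hterm : ∀ c α : ℝ, Tendsto (fun a => √(a / D) *
      ((c * √(a / D) - c * α * exp (-(π / 2) * √(D / a) * α)) / (α ^ 2 + a / D))) atTop (𝓝 c) := by
    intro c α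
    have hE := ((tendsto_sqrt_const_div_atTop_nhds_zero D).const_mul (-(π / 2))).mul_const α |>.rexp
    refine (tendsto_mul_sub_div_sq_add_sq c α hs hE).congr' ?_
    filter_upwards [eventually_ge_atTop 0] with a ha
    rw [sq_sqrt (div_nonneg ha hD.le)]
  have hdiff := ((hterm c₁ α₁).sub (hterm c₂ α₂)).eventually (lt_mem_nhds (sub_pos.2 hc))
  obtain ⟨A, hA⟩ := eventually_atTop.1 (hdiff.and (hs.eventually_gt_atTop 0))
  refine ⟨A, fun a ha => ?_⟩
  obtain ⟨hprod, hpos⟩ := hA a ha.le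
  rw [← mul_sub] at hprod
  exact pos_of_mul_pos_right hprod hpos.le

/-- Positivity of the leading coefficient of `F(h)` at `h = (π/2)√(D/a)` for all
sufficiently large `a` (inequality (2.13) of the paper). -/
theorem leading_coefficient_positive (D c₁ c₂ α₁ α₂ : ℝ) (hD : 0 < D)
    (hc : c₁ > c₂) (hc₂ : c₂ > 0) (hα : α₁ > α₂) (hα₂ : α₂ > 0) :
    ∃ A : ℝ, ∀ a : ℝ, A < a →
      0 < (c₁ * Real.sqrt (a / D) - c₁ * α₁ * Real.exp (-(π / 2) * Real.sqrt (D / a) * α₁))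
            / (α₁ ^ 2 + a / D)
          - (c₂ * Real.sqrt (a / D) - c₂ * α₂ * Real.exp (-(π / 2) * Real.sqrt (D / a) * α₂))
            / (α₂ ^ 2 + a / D) :=
  leading_coefficient_positive_general D c₁ c₂ α₁ α₂ hD hc
end
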